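/- arXiv:1410.7081 — 2 statements merged into one kernel-verified Lean document; each statement's English description precedes it below -/
import Mathlib

section
/- For 0 < q < 1, the Jacobi theta functions satisfy θ₃(q)⁴ = θ₂(q)⁴ + θ₄(q)⁴. -/
/-!
Squaring a theta series gives a sum over `ℤ × ℤ`, which splits into a sum over the sublattice
`{(m + n, m - n)}` and one over its coset `{(m + n - 1, m - n)}`. There `a² + b²` becomes
`2 (m² + n²)`, resp. `2 ((m - 1/2)² + (n - 1/2)²)`, which gives the duplication formulas
`θ₃(q)² = θ₃(q²)² + θ₂(q²)²`, `θ₄(q)² = θ₃(q²)² - θ₂(q²)²` and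
`θ₂(q)² = 2 θ₂(q²) θ₃(q²)`.
The identity then is `(u² + v²)² = (2uv)² + (u² - v²)²`.
-/

noncomputable def theta2 (q : ℝ) : ℝ := ∑' n : ℤ, q ^ (((n : ℝ) - 1/2)^2)

noncomputable def theta3 (q : ℝ) : ℝ := ∑' n : ℤ, q ^ ((n : ℝ)^2)

noncomputable def theta4 (q : ℝ) : ℝ := ∑' n : ℤ, (-1 : ℝ)^n * q ^ ((n : ℝ)^2)

open Real

def evenOddEquiv : (ℤ × ℤ) ⊕ (ℤ × ℤ) ≃ ℤ × ℤ where
  toFun := Sum.elim (fun p => (p.1 + p.2, p.1 - p.2)) (fun p => (p.1 + p.2 - 1, p.1 - p.2))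
  invFun p :=
    if (p.1 + p.2) % 2 = 0 then .inl ((p.1 + p.2) / 2, (p.1 - p.2) / 2)
    else .inr ((p.1 + p.2 + 1) / 2, (p.1 - p.2 + 1) / 2)
  left_inv := by
    rintro (⟨m, n⟩ | ⟨m, n⟩)
    · dsimp only [Sum.elim_inl]
      rw [if_pos (by omega)]
      congr 2 <;> omega
    · dsimp only [Sum.elim_inr]
      rw [if_neg (by omega)]
      congr 2 <;> omega
  right_inv := by
    rintro ⟨a, b⟩
    dsimp only
    split_ifs
    · dsimp only [Sum.elim_inl]
      congr 1 <;> omega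
    · dsimp only [Sum.elim_inr]
      congr 1 <;> omega

theorem tsum_mul_tsum_eq_even_add_odd {R : Type*} [NormedRing R] [CompleteSpace R]
    {f g : ℤ → R} (hf : Summable fun n => ‖f n‖) (hg : Summable fun n => ‖g n‖) :
    (∑' n, f n) * ∑' n, g n =
      ∑' p : ℤ × ℤ, f (p.1 + p.2) * g (p.1 - p.2) +
        ∑' p : ℤ × ℤ, f (p.1 + p.2 - 1) * g (p.1 - p.2) := by
  have hfg : Summable ((fun p : ℤ × ℤ => f p.1 * g p.2) ∘ evenOddEquiv) :=
    evenOddEquiv.summable_iff.mpr (hf.mul_norm hg).of_norm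
  rw [tsum_mul_tsum_of_summable_norm hf hg, ← evenOddEquiv.tsum_eq]
  exact Summable.tsum_sum (hfg.comp_injective Sum.inl_injective)
    (hfg.comp_injective Sum.inr_injective)

variable {q : ℝ}

theorem summable_nat_rpow_sub_sq (hq0 : 0 < q) (hq1 : q < 1) (c : ℝ) :
    Summable fun n : ℕ => q ^ (((n : ℝ) - c) ^ 2) := by
  refine .of_nonneg_of_le (fun n => by positivity) (fun n => ?_)
    ((summable_geometric_of_lt_one hq0.le hq1).mul_right (q ^ (-(c + 1 / 4))))
  calc q ^ (((n : ℝ) - c) ^ 2) ≤ q ^ ((n : ℝ) + -(c + 1 / 4)) :=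
        rpow_le_rpow_of_exponent_ge hq0 hq1.le (by nlinarith [sq_nonneg ((n : ℝ) - c - 1 / 2)])
    _ = q ^ n * q ^ (-(c + 1 / 4)) := by rw [rpow_add hq0, rpow_natCast]

theorem summable_norm_rpow_sub_sq (hq0 : 0 < q) (hq1 : q < 1) (c : ℝ) :
    Summable fun n : ℤ => ‖q ^ (((n : ℝ) - c) ^ 2)‖ := by
  simp only [norm_of_nonneg (rpow_nonneg hq0.le _)]
  refine .of_nat_of_neg (by simpa using summable_nat_rpow_sub_sq hq0 hq1 c) ?_
  refine (summable_nat_rpow_sub_sq hq0 hq1 (-c)).congr fun n => ?_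
  push_cast
  congr 1
  ring

theorem summable_norm_theta3_term (hq0 : 0 < q) (hq1 : q < 1) :
    Summable fun n : ℤ => ‖q ^ ((n : ℝ) ^ 2)‖ := by
  simpa using summable_norm_rpow_sub_sq hq0 hq1 0

theorem summable_norm_theta4_term (hq0 : 0 < q) (hq1 : q < 1) :
    Summable fun n : ℤ => ‖(-1 : ℝ) ^ n * q ^ ((n : ℝ) ^ 2)‖ := by
  simpa [norm_mul, norm_zpow] using summable_norm_theta3_term hq0 hq1

theorem rpow_mul_rpow_eq_sq_rpow_mul_rpow (hq0 : 0 < q) {x y u v : ℝ}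
    (h : x + y = 2 * (u + v)) :
    q ^ x * q ^ y = (q ^ 2) ^ u * (q ^ 2) ^ v := by
  rw [← rpow_add hq0, ← rpow_add (by positivity), h, rpow_mul hq0.le, rpow_two]

theorem tsum_rpow_sub_one_sq (r : ℝ) :
    ∑' n : ℤ, r ^ (((n : ℝ) - 1) ^ 2) = ∑' n : ℤ, r ^ ((n : ℝ) ^ 2) := by
  simpa using (Equiv.subRight (1 : ℤ)).tsum_eq fun n : ℤ => r ^ ((n : ℝ) ^ 2)

theorem sq_pos_and_sq_lt_one (hq0 : 0 < q) (hq1 : q < 1) : 0 < q ^ 2 ∧ q ^ 2 < 1 :=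
  ⟨by positivity, pow_lt_one₀ hq0.le hq1 two_ne_zero⟩

theorem theta3_sq (hq0 : 0 < q) (hq1 : q < 1) :
    theta3 q ^ 2 = theta3 (q ^ 2) ^ 2 + theta2 (q ^ 2) ^ 2 := by
  obtain ⟨hr0, hr1⟩ := sq_pos_and_sq_lt_one hq0 hq1
  have s3 := summable_norm_theta3_term hr0 hr1
  have s2 := summable_norm_rpow_sub_sq hr0 hr1 (1 / 2)
  calc theta3 q ^ 2
      = ∑' p : ℤ × ℤ,
            q ^ (((p.1 + p.2 : ℤ) : ℝ) ^ 2) * q ^ (((p.1 - p.2 : ℤ) : ℝ) ^ 2) +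
          ∑' p : ℤ × ℤ,
            q ^ (((p.1 + p.2 - 1 : ℤ) : ℝ) ^ 2) * q ^ (((p.1 - p.2 : ℤ) : ℝ) ^ 2) := by
        rw [sq, theta3]
        exact tsum_mul_tsum_eq_even_add_odd (summable_norm_theta3_term hq0 hq1)
          (summable_norm_theta3_term hq0 hq1)
    _ = ∑' p : ℤ × ℤ, (q ^ 2) ^ ((p.1 : ℝ) ^ 2) * (q ^ 2) ^ ((p.2 : ℝ) ^ 2) +
          ∑' p : ℤ × ℤ,
            (q ^ 2) ^ (((p.1 : ℝ) - 1 / 2) ^ 2) * (q ^ 2) ^ (((p.2 : ℝ) - 1 / 2) ^ 2) := by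
        congr 1 <;> refine tsum_congr fun p => rpow_mul_rpow_eq_sq_rpow_mul_rpow hq0 ?_ <;>
          push_cast <;> ring
    _ = theta3 (q ^ 2) ^ 2 + theta2 (q ^ 2) ^ 2 := by
        rw [← tsum_mul_tsum_of_summable_norm s3 s3, ← tsum_mul_tsum_of_summable_norm s2 s2,
          theta3, theta2]
        ring

theorem theta4_sq (hq0 : 0 < q) (hq1 : q < 1) :
    theta4 q ^ 2 = theta3 (q ^ 2) ^ 2 - theta2 (q ^ 2) ^ 2 := by
  obtain ⟨hr0, hr1⟩ := sq_pos_and_sq_lt_one hq0 hq1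
  have s3 := summable_norm_theta3_term hr0 hr1
  have s2 := summable_norm_rpow_sub_sq hr0 hr1 (1 / 2)
  have hsign : ∀ a b : ℤ,
      (-1 : ℝ) ^ a * q ^ ((a : ℝ) ^ 2) * ((-1 : ℝ) ^ b * q ^ ((b : ℝ) ^ 2)) =
      (-1 : ℝ) ^ (a + b) * (q ^ ((a : ℝ) ^ 2) * q ^ ((b : ℝ) ^ 2)) := fun a b => by
    rw [zpow_add₀ (by norm_num)]
    ring
  calc theta4 q ^ 2
      = ∑' p : ℤ × ℤ,
            q ^ (((p.1 + p.2 : ℤ) : ℝ) ^ 2) * q ^ (((p.1 - p.2 : ℤ) : ℝ) ^ 2) +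
          ∑' p : ℤ × ℤ,
            -(q ^ (((p.1 + p.2 - 1 : ℤ) : ℝ) ^ 2) * q ^ (((p.1 - p.2 : ℤ) : ℝ) ^ 2)) := by
        rw [sq, theta4, tsum_mul_tsum_eq_even_add_odd (summable_norm_theta4_term hq0 hq1)
          (summable_norm_theta4_term hq0 hq1)]
        congr 1 <;> refine tsum_congr fun p => ?_ <;> rw [hsign]
        · rw [show p.1 + p.2 + (p.1 - p.2) = 2 * p.1 by ring, (even_two_mul p.1).neg_one_zpow,
            one_mul]
        · rw [show p.1 + p.2 - 1 + (p.1 - p.2) = 2 * (p.1 - 1) + 1 by ring,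
            (odd_two_mul_add_one _).neg_one_zpow, neg_one_mul]
    _ = ∑' p : ℤ × ℤ, (q ^ 2) ^ ((p.1 : ℝ) ^ 2) * (q ^ 2) ^ ((p.2 : ℝ) ^ 2) -
          ∑' p : ℤ × ℤ,
            (q ^ 2) ^ (((p.1 : ℝ) - 1 / 2) ^ 2) * (q ^ 2) ^ (((p.2 : ℝ) - 1 / 2) ^ 2) := by
        rw [tsum_neg, ← sub_eq_add_neg]
        congr 1 <;> refine tsum_congr fun p => rpow_mul_rpow_eq_sq_rpow_mul_rpow hq0 ?_ <;>
          push_cast <;> ring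
    _ = theta3 (q ^ 2) ^ 2 - theta2 (q ^ 2) ^ 2 := by
        rw [← tsum_mul_tsum_of_summable_norm s3 s3, ← tsum_mul_tsum_of_summable_norm s2 s2,
          theta3, theta2]
        ring

theorem theta2_sq (hq0 : 0 < q) (hq1 : q < 1) :
    theta2 q ^ 2 = 2 * theta2 (q ^ 2) * theta3 (q ^ 2) := by
  obtain ⟨hr0, hr1⟩ := sq_pos_and_sq_lt_one hq0 hq1
  have s3 := summable_norm_theta3_term hr0 hr1
  have s3' := summable_norm_rpow_sub_sq hr0 hr1 1
  have s2 := summable_norm_rpow_sub_sq hr0 hr1 (1 / 2)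
  have s := summable_norm_rpow_sub_sq hq0 hq1 (1 / 2)
  calc theta2 q ^ 2
      = ∑' p : ℤ × ℤ, q ^ ((((p.1 + p.2 : ℤ) : ℝ) - 1 / 2) ^ 2) *
            q ^ ((((p.1 - p.2 : ℤ) : ℝ) - 1 / 2) ^ 2) +
          ∑' p : ℤ × ℤ, q ^ ((((p.1 + p.2 - 1 : ℤ) : ℝ) - 1 / 2) ^ 2) *
            q ^ ((((p.1 - p.2 : ℤ) : ℝ) - 1 / 2) ^ 2) := by
        rw [sq, theta2]
        exact tsum_mul_tsum_eq_even_add_odd s s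
    _ = ∑' p : ℤ × ℤ, (q ^ 2) ^ (((p.1 : ℝ) - 1 / 2) ^ 2) * (q ^ 2) ^ ((p.2 : ℝ) ^ 2) +
          ∑' p : ℤ × ℤ,
            (q ^ 2) ^ (((p.1 : ℝ) - 1) ^ 2) * (q ^ 2) ^ (((p.2 : ℝ) - 1 / 2) ^ 2) := by
        congr 1 <;> refine tsum_congr fun p => rpow_mul_rpow_eq_sq_rpow_mul_rpow hq0 ?_ <;>
          push_cast <;> ring
    _ = 2 * theta2 (q ^ 2) * theta3 (q ^ 2) := by
        rw [← tsum_mul_tsum_of_summable_norm s2 s3, ← tsum_mul_tsum_of_summable_norm s3' s2,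
          tsum_rpow_sub_one_sq, theta2, theta3]
        ring

theorem stmt_2 (q : ℝ) (hq : 0 < q) (hq1 : q < 1) :
    (theta3 q)^4 = (theta2 q)^4 + (theta4 q)^4 := by
  calc theta3 q ^ 4 = (theta3 q ^ 2) ^ 2 := by ring
    _ = (theta2 q ^ 2) ^ 2 + (theta4 q ^ 2) ^ 2 := by
      rw [theta3_sq hq hq1, theta2_sq hq hq1, theta4_sq hq hq1]
      ring
    _ = theta2 q ^ 4 + theta4 q ^ 4 := by ring
end

section
/- ∫₀¹ k K(k) K'(k) dk = π³/16. -/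
/-!
Substituting `u = k x` gives `K(k) = ∫₀ᵏ du / (√(k² - u²) √(1 - u²))`, and likewise for
`K'(k) = K(√(1 - k²))`, so `∫₀¹ k K(k) K'(k) dk` becomes a triple integral of a nonnegative
function of `(k, u, w)`. Whenever `u² + w² < 1`, the `k`-integral of
`k / (√(k² - u²) √(1 - w² - k²))` over `u² < k² < 1 - w²` is `π / 2`, whatever `u` and `w`
are. What remains is
`∫∫_{u² + w² < 1} du dw / (√(1 - u²) √(1 - w²)) = ∫₀¹ arccos u / √(1 - u²) du = π² / 8`.
All integrals are taken in `ℝ≥0∞`, where Tonelli's theorem needs no integrability hypotheses.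
-/

open scoped Real
open MeasureTheory

noncomputable def EllK (k : ℝ) : ℝ :=
  ∫ x in (0:ℝ)..(1:ℝ), 1 / Real.sqrt ((1 - x^2) * (1 - k^2 * x^2))

noncomputable def EllE (k : ℝ) : ℝ :=
  ∫ x in (0:ℝ)..(1:ℝ), Real.sqrt ((1 - k^2 * x^2) / (1 - x^2))

noncomputable def EllK' (k : ℝ) : ℝ := EllK (Real.sqrt (1 - k^2))

open scoped ENNReal
open Real Set

theorem setLIntegral_eq_of_subset_of_forall_sdiff_eq_zero {α : Type*} [MeasurableSpace α]
    {μ : Measure α} {s t : Set α} {f : α → ℝ≥0∞} (ht : MeasurableSet t) (hst : s ⊆ t)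
    (hf : ∀ x ∈ t \ s, f x = 0) : ∫⁻ x in t, f x ∂μ = ∫⁻ x in s, f x ∂μ := by
  refine le_antisymm ?_ (lintegral_mono_set hst)
  calc ∫⁻ x in t, f x ∂μ = ∫⁻ x in t, s.indicator f x ∂μ :=
        setLIntegral_congr_fun ht fun x hx => by
          by_cases hxs : x ∈ s
          · rw [indicator_of_mem hxs]
          · rw [indicator_of_notMem hxs, hf x ⟨hx, hxs⟩]
    _ ≤ ∫⁻ x in s, f x ∂μ.restrict t := lintegral_indicator_le f s
    _ ≤ ∫⁻ x in s, f x ∂μ :=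
        lintegral_mono' (Measure.restrict_mono subset_rfl Measure.restrict_le_self) le_rfl

theorem lintegral_Ioo_ofReal_deriv_eq_sub {f f' : ℝ → ℝ} {a b : ℝ} (hab : a ≤ b)
    (hcont : ContinuousOn f (Icc a b)) (hderiv : ∀ x ∈ Ioo a b, HasDerivAt f (f' x) x)
    (hpos : ∀ x ∈ Ioo a b, 0 ≤ f' x) :
    ∫⁻ x in Ioo a b, ENNReal.ofReal (f' x) = ENNReal.ofReal (f b - f a) := by
  have hint := intervalIntegral.integrableOn_deriv_of_nonneg hcont hderiv hpos
  rw [← ofReal_integral_eq_lintegral_ofReal (hint.mono_set Ioo_subset_Ioc_self)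
      ((ae_restrict_iff' measurableSet_Ioo).2 (ae_of_all _ hpos)),
    ← integral_Ioc_eq_integral_Ioo, ← intervalIntegral.integral_of_le hab,
    intervalIntegral.integral_eq_sub_of_hasDeriv_right_of_le hab hcont
      (fun x hx => (hderiv x hx).hasDerivWithinAt)
      ((intervalIntegrable_iff_integrableOn_Ioc_of_le hab).2 hint)]

theorem lintegral_lintegral_lintegral_rotate {α β γ : Type*} [MeasurableSpace α]
    [MeasurableSpace β] [MeasurableSpace γ] {μ : Measure α} {ν : Measure β} {ρ : Measure γ}
    [SFinite μ] [SFinite ν] [SFinite ρ] {f : α → β → γ → ℝ≥0∞}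
    (hf : Measurable fun p : α × β × γ => f p.1 p.2.1 p.2.2) :
    ∫⁻ x, ∫⁻ y, ∫⁻ z, f x y z ∂ρ ∂ν ∂μ = ∫⁻ y, ∫⁻ z, ∫⁻ x, f x y z ∂μ ∂ρ ∂ν := by
  rw [lintegral_lintegral_swap
    (hf.comp MeasurableEquiv.prodAssoc.measurable).lintegral_prod_right'.aemeasurable]
  refine lintegral_congr fun y => lintegral_lintegral_swap ?_
  exact (hf.comp (measurable_fst.prodMk (measurable_const.prodMk measurable_snd))).aemeasurable

theorem hasDerivAt_arcsin_div_two {A B k : ℝ} (hAk : A < k ^ 2) (hkB : k ^ 2 < B) :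
    HasDerivAt (fun k => arcsin ((2 * k ^ 2 - A - B) / (B - A)) / 2)
      (k / (√(k ^ 2 - A) * √(B - k ^ 2))) k := by
  have hBA : 0 < B - A := by linarith
  set φ := (2 * k ^ 2 - A - B) / (B - A) with hφ
  have hφ_lt : φ < 1 := by rw [hφ, div_lt_one hBA]; linarith
  have hφ_gt : -1 < φ := by rw [hφ, lt_div_iff₀ hBA]; linarith
  have hinner : HasDerivAt (fun k : ℝ => (2 * k ^ 2 - A - B) / (B - A)) (4 * k / (B - A)) k := by
    refine ((((hasDerivAt_pow 2 k).const_mul 2).sub_const A).sub_const B).div_const (B - A)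
      |>.congr_deriv ?_
    push_cast
    ring
  refine ((hasDerivAt_arcsin hφ_gt.ne' hφ_lt.ne).comp k hinner |>.div_const 2).congr_deriv ?_
  have hsqrt : √(1 - φ ^ 2) = 2 * √(k ^ 2 - A) * √(B - k ^ 2) / (B - A) := by
    have hsq : (2 * √(k ^ 2 - A) * √(B - k ^ 2) / (B - A)) ^ 2
        = 4 * (k ^ 2 - A) * (B - k ^ 2) / (B - A) ^ 2 := by
      rw [div_pow, mul_pow, mul_pow, sq_sqrt (by linarith), sq_sqrt (by linarith)]
      ring
    rw [← sqrt_sq (by positivity : 0 ≤ 2 * √(k ^ 2 - A) * √(B - k ^ 2) / (B - A)), hsq, hφ]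
    congr 1
    field_simp
    ring
  have : 0 < √(k ^ 2 - A) := sqrt_pos.2 (by linarith)
  have : 0 < √(B - k ^ 2) := sqrt_pos.2 (by linarith)
  rw [hsqrt]
  field_simp
  ring

theorem support_ofReal_div_sqrt_mul_sqrt_subset (A B : ℝ) :
    (Function.support fun k => ENNReal.ofReal (k / (√(k ^ 2 - A) * √(B - k ^ 2))))
      ⊆ Ioo √A √B := by
  intro k hk
  rw [Function.mem_support, ne_eq, ENNReal.ofReal_eq_zero, not_le] at hk
  obtain ⟨hk0, hden⟩ | ⟨-, hden⟩ := div_pos_iff.1 hk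
  · have h1 := sqrt_pos.1 (pos_of_mul_pos_left hden (sqrt_nonneg _))
    have h2 := sqrt_pos.1 (pos_of_mul_pos_right hden (sqrt_nonneg _))
    exact ⟨(sqrt_lt' hk0).2 (by linarith), (lt_sqrt hk0.le).2 (by linarith)⟩
  · exact absurd hden (not_lt.2 (by positivity))

theorem lintegral_ofReal_div_sqrt_mul_sqrt {A B : ℝ} (hA : 0 ≤ A) :
    ∫⁻ k, ENNReal.ofReal (k / (√(k ^ 2 - A) * √(B - k ^ 2)))
      = if A < B then ENNReal.ofReal (π / 2) else 0 := by
  rw [← setLIntegral_eq_of_support_subset (support_ofReal_div_sqrt_mul_sqrt_subset A B)]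
  split_ifs with hAB
  · have hmem : ∀ k ∈ Ioo √A √B, A < k ^ 2 ∧ k ^ 2 < B ∧ 0 < k := fun k hk => by
      have hk0 : 0 < k := (sqrt_nonneg A).trans_lt hk.1
      exact ⟨(sqrt_lt' hk0).1 hk.1, (lt_sqrt hk0.le).1 hk.2, hk0⟩
    rw [lintegral_Ioo_ofReal_deriv_eq_sub (sqrt_le_sqrt hAB.le) (by fun_prop)
      (fun k hk => hasDerivAt_arcsin_div_two (hmem k hk).1 (hmem k hk).2.1)
      (fun k hk => div_nonneg (hmem k hk).2.2.le (by positivity))]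
    have hBA : B - A ≠ 0 := by linarith
    rw [sq_sqrt hA, sq_sqrt (hA.trans hAB.le), show 2 * B - A - B = B - A by ring,
      show 2 * A - A - B = -(B - A) by ring, neg_div, div_self hBA, arcsin_neg, arcsin_one]
    ring_nf
  · rw [Ioo_eq_empty (not_lt.2 (sqrt_le_sqrt (not_lt.1 hAB))), Measure.restrict_empty,
      lintegral_zero_measure]

theorem lintegral_Ioo_ofReal_inv_sqrt_one_sub_sq {a b : ℝ} (ha : -1 ≤ a) (hab : a ≤ b)
    (hb : b ≤ 1) :
    ∫⁻ x in Ioo a b, ENNReal.ofReal (1 / √(1 - x ^ 2)) = ENNReal.ofReal (arcsin b - arcsin a) :=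
  lintegral_Ioo_ofReal_deriv_eq_sub hab continuous_arcsin.continuousOn
    (fun x hx => hasDerivAt_arcsin (by linarith [hx.1]) (by linarith [hx.2]))
    (fun x _ => by positivity)

theorem lintegral_Ioo_ofReal_arccos_div_sqrt :
    ∫⁻ x in Ioo 0 1, ENNReal.ofReal (arccos x / √(1 - x ^ 2)) = ENNReal.ofReal (π ^ 2 / 8) := by
  rw [lintegral_Ioo_ofReal_deriv_eq_sub (f := fun x => -arccos x ^ 2 / 2) zero_le_one
    (by fun_prop) (fun x hx => ?_) (fun x _ => div_nonneg (arccos_nonneg x) (sqrt_nonneg _))]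
  · simp only [arccos_one, arccos_zero]
    ring_nf
  · refine ((hasDerivAt_arccos (by linarith [hx.1]) hx.2.ne).pow 2).neg.div_const 2
      |>.congr_deriv ?_
    push_cast
    ring

theorem integrableOn_Ioo_one_div_sqrt_sub (a b : ℝ) :
    IntegrableOn (fun u => 1 / √(b - u)) (Ioo a b) := by
  refine (intervalIntegral.integrableOn_deriv_of_nonneg (g := fun u => -2 * √(b - u))
    (by fun_prop) (fun u hu => ?_) (fun u _ => by positivity)).mono_set Ioo_subset_Ioc_self
  have hbu : b - u ≠ 0 := by linarith [hu.2]
  refine ((hasDerivAt_sqrt hbu).comp u ((hasDerivAt_id u).const_sub b)).const_mul (-2)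
    |>.congr_deriv ?_
  field_simp

noncomputable def ellKIntegrand (b u : ℝ) : ℝ := 1 / (√(b ^ 2 - u ^ 2) * √(1 - u ^ 2))

theorem ellKIntegrand_nonneg (b u : ℝ) : 0 ≤ ellKIntegrand b u := by
  unfold ellKIntegrand; positivity

theorem ellKIntegrand_of_le {b u : ℝ} (hb : 0 ≤ b) (hbu : b ≤ u) : ellKIntegrand b u = 0 := by
  rw [ellKIntegrand, sqrt_eq_zero'.2 (by nlinarith), zero_mul, div_zero]

theorem EllK_eq_intervalIntegral_ellKIntegrand {b : ℝ} (hb : 0 < b) :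
    EllK b = ∫ u in 0..b, ellKIntegrand b u := by
  have hpt : ∀ x ∈ uIcc (0 : ℝ) 1,
      1 / √((1 - x ^ 2) * (1 - b ^ 2 * x ^ 2)) = b * ellKIntegrand b (b * x) := by
    intro x hx
    rw [uIcc_of_le zero_le_one] at hx
    have hx2 : 0 ≤ 1 - x ^ 2 := by nlinarith [hx.1, hx.2]
    rw [ellKIntegrand, show b ^ 2 - (b * x) ^ 2 = b ^ 2 * (1 - x ^ 2) by ring,
      show 1 - (b * x) ^ 2 = 1 - b ^ 2 * x ^ 2 by ring, sqrt_mul (sq_nonneg b),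
      sqrt_sq hb.le, sqrt_mul hx2]
    field_simp
  rw [EllK, intervalIntegral.integral_congr hpt, intervalIntegral.integral_const_mul,
    intervalIntegral.integral_comp_mul_left _ hb.ne', mul_zero, mul_one, smul_eq_mul,
    mul_inv_cancel_left₀ hb.ne']

theorem integrableOn_ellKIntegrand {b : ℝ} (hb0 : 0 < b) (hb1 : b < 1) :
    IntegrableOn (ellKIntegrand b) (Ioo 0 b) := by
  refine ((integrableOn_Ioo_one_div_sqrt_sub 0 b).const_mul (1 / (√b * √(1 - b ^ 2)))).mono'
    (by unfold ellKIntegrand; fun_prop : Measurable _).aestronglyMeasurable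
    ((ae_restrict_iff' measurableSet_Ioo).2 (ae_of_all _ ?_))
  rintro u ⟨hu0, hub⟩
  have : 0 < √(b - u) * (√b * √(1 - b ^ 2)) := by
    have := sqrt_pos.2 (sub_pos.2 hub)
    have := sqrt_pos.2 hb0
    have := sqrt_pos.2 (by nlinarith : 0 < 1 - b ^ 2)
    positivity
  calc ‖ellKIntegrand b u‖ = 1 / (√(b ^ 2 - u ^ 2) * √(1 - u ^ 2)) :=
        norm_of_nonneg (ellKIntegrand_nonneg b u)
    _ ≤ 1 / (√(b - u) * (√b * √(1 - b ^ 2))) := by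
        refine one_div_le_one_div_of_le this ?_
        rw [← sqrt_mul hb0.le, ← sqrt_mul (sub_pos.2 hub).le,
          ← sqrt_mul (by nlinarith : 0 ≤ b ^ 2 - u ^ 2)]
        refine sqrt_le_sqrt ?_
        have h : b * (1 - b ^ 2) ≤ (b + u) * (1 - u ^ 2) :=
          mul_le_mul (by linarith) (by nlinarith) (by nlinarith) (by linarith)
        nlinarith [mul_le_mul_of_nonneg_left h (sub_pos.2 hub).le]
    _ = 1 / (√b * √(1 - b ^ 2)) * (1 / √(b - u)) := by rw [one_div_mul_one_div, mul_comm]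

theorem ofReal_EllK_eq_lintegral {b : ℝ} (hb0 : 0 < b) (hb1 : b < 1) :
    ENNReal.ofReal (EllK b) = ∫⁻ u in Ioo 0 1, ENNReal.ofReal (ellKIntegrand b u) := by
  rw [EllK_eq_intervalIntegral_ellKIntegrand hb0, intervalIntegral.integral_of_le hb0.le,
    integral_Ioc_eq_integral_Ioo, ofReal_integral_eq_lintegral_ofReal
      (integrableOn_ellKIntegrand hb0 hb1) (ae_of_all _ (ellKIntegrand_nonneg b)),
    setLIntegral_eq_of_subset_of_forall_sdiff_eq_zero measurableSet_Ioo
      (Ioo_subset_Ioo_right hb1.le) fun u hu => ?_]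
  rw [ellKIntegrand_of_le hb0.le (not_lt.1 fun hub => hu.2 ⟨hu.1.1, hub⟩), ENNReal.ofReal_zero]

theorem EllK_nonneg (k : ℝ) : 0 ≤ EllK k :=
  intervalIntegral.integral_nonneg zero_le_one fun _ _ => by positivity

theorem stronglyMeasurable_EllK : StronglyMeasurable EllK := by
  have h : StronglyMeasurable (Function.uncurry fun (k x : ℝ) =>
      1 / √((1 - x ^ 2) * (1 - k ^ 2 * x ^ 2))) := by
    apply Measurable.stronglyMeasurable
    fun_prop
  simp_rw [funext fun k => EllK.eq_1 k, intervalIntegral.integral_of_le zero_le_one]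
  exact h.integral_prod_right

/-- Through `√` of negative numbers and division by zero, this vanishes unless
`u < k < √(1 - w²)`, so `k`, `u` and `w` may all range over `(0, 1)`. -/
noncomputable def ellKProductKernel (k u w : ℝ) : ℝ≥0∞ :=
  ENNReal.ofReal (k / (√(k ^ 2 - u ^ 2) * √(1 - w ^ 2 - k ^ 2))) *
    ENNReal.ofReal (1 / √(1 - u ^ 2) * (1 / √(1 - w ^ 2)))

theorem measurable_ellKProductKernel :
    Measurable fun p : ℝ × ℝ × ℝ => ellKProductKernel p.1 p.2.1 p.2.2 := by
  unfold ellKProductKernel; fun_prop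

theorem ofReal_mul_EllK_mul_EllK'_eq_lintegral {k : ℝ} (hk0 : 0 < k) (hk1 : k < 1) :
    ENNReal.ofReal (k * EllK k * EllK' k)
      = ∫⁻ u in Ioo 0 1, ∫⁻ w in Ioo 0 1, ellKProductKernel k u w := by
  have hk2 : 0 < 1 - k ^ 2 := by nlinarith
  set c := √(1 - k ^ 2) with hc
  have hc0 : 0 < c := sqrt_pos.2 hk2
  have hc2 : c ^ 2 = 1 - k ^ 2 := sq_sqrt hk2.le
  have hc1 : c < 1 := by nlinarith
  have hkernel : ∀ u w,
      ENNReal.ofReal (k * ellKIntegrand k u) * ENNReal.ofReal (ellKIntegrand c w)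
        = ellKProductKernel k u w := fun u w => by
    rw [ellKProductKernel, ← ENNReal.ofReal_mul (mul_nonneg hk0.le (ellKIntegrand_nonneg k u)),
      ← ENNReal.ofReal_mul (div_nonneg hk0.le (by positivity)), ellKIntegrand, ellKIntegrand, hc2,
      show 1 - k ^ 2 - w ^ 2 = 1 - w ^ 2 - k ^ 2 by ring]
    simp only [div_eq_mul_inv, one_mul, mul_inv]
    ring_nf
  calc ENNReal.ofReal (k * EllK k * EllK' k)
      = (∫⁻ u in Ioo 0 1, ENNReal.ofReal (k * ellKIntegrand k u)) *
          ∫⁻ w in Ioo 0 1, ENNReal.ofReal (ellKIntegrand c w) := by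
        rw [ENNReal.ofReal_mul (mul_nonneg hk0.le (EllK_nonneg k)), ENNReal.ofReal_mul hk0.le,
          EllK', ← hc, ofReal_EllK_eq_lintegral hk0 hk1, ofReal_EllK_eq_lintegral hc0 hc1,
          ← lintegral_const_mul' _ _ ENNReal.ofReal_ne_top]
        simp_rw [← ENNReal.ofReal_mul hk0.le]
    _ = ∫⁻ u in Ioo 0 1, ∫⁻ w in Ioo 0 1, ellKProductKernel k u w := by
        rw [← lintegral_lintegral_mul (by unfold ellKIntegrand; fun_prop)
          (by unfold ellKIntegrand; fun_prop)]
        simp_rw [hkernel]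

theorem lintegral_ellKProductKernel_left (u w : ℝ) :
    ∫⁻ k in Ioo 0 1, ellKProductKernel k u w
      = (if u ^ 2 < 1 - w ^ 2 then ENNReal.ofReal (π / 2) else 0) *
          ENNReal.ofReal (1 / √(1 - u ^ 2) * (1 / √(1 - w ^ 2))) := by
  have hsupp := (support_ofReal_div_sqrt_mul_sqrt_subset (u ^ 2) (1 - w ^ 2)).trans
    (Ioo_subset_Ioo (sqrt_nonneg _) (sqrt_le_one.2 (by nlinarith)))
  simp only [ellKProductKernel]
  rw [lintegral_mul_const' _ _ ENNReal.ofReal_ne_top, setLIntegral_eq_of_support_subset hsupp,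
    lintegral_ofReal_div_sqrt_mul_sqrt (sq_nonneg u)]

theorem lintegral_Ioo_ite_sq_lt_one_sub_sq {u : ℝ} (hu : 0 ≤ u) :
    ∫⁻ w in Ioo 0 1, (if u ^ 2 < 1 - w ^ 2 then ENNReal.ofReal (π / 2) else 0) *
        ENNReal.ofReal (1 / √(1 - u ^ 2) * (1 / √(1 - w ^ 2)))
      = ENNReal.ofReal (π / 2) * ENNReal.ofReal (arccos u / √(1 - u ^ 2)) := by
  set s := √(1 - u ^ 2)
  have hs1 : s ≤ 1 := sqrt_le_one.2 (by nlinarith)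
  have hlt : ∀ w, 0 ≤ w → (u ^ 2 < 1 - w ^ 2 ↔ w < s) := fun w hw => by
    rw [lt_sqrt hw]; constructor <;> intro h <;> linarith
  rw [setLIntegral_eq_of_subset_of_forall_sdiff_eq_zero measurableSet_Ioo
      (Ioo_subset_Ioo_right hs1) fun w hw => by
        rw [if_neg fun h => hw.2 ⟨hw.1.1, (hlt w hw.1.1.le).1 h⟩, zero_mul],
    setLIntegral_congr_fun measurableSet_Ioo fun w hw => by
      rw [if_pos ((hlt w hw.1.le).2 hw.2), ENNReal.ofReal_mul (by positivity), ← mul_assoc],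
    lintegral_const_mul' _ _ (ENNReal.mul_ne_top ENNReal.ofReal_ne_top ENNReal.ofReal_ne_top),
    lintegral_Ioo_ofReal_inv_sqrt_one_sub_sq (by norm_num) (sqrt_nonneg _) hs1, arcsin_zero,
    sub_zero, ← arccos_eq_arcsin hu, mul_assoc, ← ENNReal.ofReal_mul (by positivity),
    one_div_mul_eq_div]

theorem lintegral_ofReal_mul_EllK_mul_EllK' :
    ∫⁻ k in Ioo 0 1, ENNReal.ofReal (k * EllK k * EllK' k) = ENNReal.ofReal (π ^ 3 / 16) :=
  calc ∫⁻ k in Ioo 0 1, ENNReal.ofReal (k * EllK k * EllK' k)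
      = ∫⁻ k in Ioo 0 1, ∫⁻ u in Ioo 0 1, ∫⁻ w in Ioo 0 1, ellKProductKernel k u w :=
        setLIntegral_congr_fun measurableSet_Ioo fun k hk =>
          ofReal_mul_EllK_mul_EllK'_eq_lintegral hk.1 hk.2
    _ = ∫⁻ u in Ioo 0 1, ∫⁻ w in Ioo 0 1, ∫⁻ k in Ioo 0 1, ellKProductKernel k u w :=
        lintegral_lintegral_lintegral_rotate measurable_ellKProductKernel
    _ = ∫⁻ u in Ioo 0 1, ENNReal.ofReal (π / 2) * ENNReal.ofReal (arccos u / √(1 - u ^ 2)) := by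
        simp_rw [lintegral_ellKProductKernel_left]
        exact setLIntegral_congr_fun measurableSet_Ioo fun u hu =>
          lintegral_Ioo_ite_sq_lt_one_sub_sq hu.1.le
    _ = ENNReal.ofReal (π ^ 3 / 16) := by
        rw [lintegral_const_mul' _ _ ENNReal.ofReal_ne_top, lintegral_Ioo_ofReal_arccos_div_sqrt,
          ← ENNReal.ofReal_mul (by positivity)]
        ring_nf

theorem stmt_9 :
    ∫ k in (0:ℝ)..(1:ℝ), k * EllK k * EllK' k = π^3 / 16 := by
  have hmeas : AEStronglyMeasurable (fun k => k * EllK k * EllK' k) (volume.restrict (Ioo 0 1)) :=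
    ((stronglyMeasurable_id.mul stronglyMeasurable_EllK).mul
      (stronglyMeasurable_EllK.comp_measurable (by fun_prop))).aestronglyMeasurable
  have hnonneg : 0 ≤ᵐ[volume.restrict (Ioo 0 1)] fun k => k * EllK k * EllK' k :=
    (ae_restrict_iff' measurableSet_Ioo).2 (ae_of_all _ fun k hk =>
      mul_nonneg (mul_nonneg hk.1.le (EllK_nonneg k)) (EllK_nonneg _))
  rw [intervalIntegral.integral_of_le zero_le_one, integral_Ioc_eq_integral_Ioo,
    integral_eq_lintegral_of_nonneg_ae hnonneg hmeas, lintegral_ofReal_mul_EllK_mul_EllK',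
    ENNReal.toReal_ofReal (by positivity)]
end
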